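/- arXiv:2304.01079 — 4 statements merged into one kernel-verified Lean document; each statement's English description precedes it below -/
import Mathlib

section
/- Let G be a locally compact Hausdorff topological group with left Haar measure μ_G and modular function Δ, let H be an open subgroup of G with Haar measure μ_H given by restricting μ_G, and let (π, V) be a unitary representation of H. Fix p ∈ [1, ∞), elements t_i, t_j ∈ G, and vectors w, w' ∈ V. Define f : G → V by f(g) = π((t_i⁻¹ g)⁻¹) w if g ∈ t_i H, and f(g) = 0 otherwise. Then ∫_G |⟨f(g⁻¹ t_j), w'⟩|^p dμ_G(g) = Δ(t_i⁻¹) · ∫_H |⟨π(h) w, w'⟩|^p dμ_H(h) (an equality in [0, ∞], both sides finite or infinite together). -/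
open MeasureTheory
open scoped Classical

/-! The integrand only sees `f` through `g ↦ f (g⁻¹ * t_j)`; left invariance of `μ` removes
`t_j`, and `f (g⁻¹) = π (g t_i) w` on `H t_i⁻¹` (zero elsewhere) because `(t_i⁻¹ g⁻¹)⁻¹ = g t_i`.
The right translation `g ↦ g t_i` pushes `μ` forward to `Δ(t_i⁻¹) μ`, and the translated
integrand vanishes off `H`. -/

section RightTranslation

variable {G : Type*} [Group G] [MeasurableSpace G] [MeasurableMul G] {μ : Measure G}

theorem map_mul_right_eq_smul_of_image_mul_right {g : G} {c : ENNReal}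
    (hc : ∀ E : Set G, MeasurableSet E → μ ((fun x => x * g⁻¹) '' E) = c * μ E) :
    μ.map (fun x => x * g) = c • μ := by
  ext E hE
  rw [Measure.map_apply (measurable_mul_const g) hE, Measure.smul_apply, smul_eq_mul, ← hc E hE,
    Set.image_mul_right, inv_inv]

theorem lintegral_mul_right_eq_mul_of_image_mul_right {g : G} {c : ENNReal}
    (hc : ∀ E : Set G, MeasurableSet E → μ ((fun x => x * g⁻¹) '' E) = c * μ E)
    (φ : G → ENNReal) :
    ∫⁻ x, φ (x * g) ∂μ = c * ∫⁻ x, φ x ∂μ := by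
  rw [← smul_eq_mul, ← lintegral_smul_measure, ← map_mul_right_eq_smul_of_image_mul_right hc]
  exact (lintegral_map_equiv φ (MeasurableEquiv.mulRight g)).symm

theorem lintegral_inv_mul_eq_lintegral_inv [μ.IsMulLeftInvariant] (φ : G → ENNReal) (g : G) :
    ∫⁻ x, φ (x⁻¹ * g) ∂μ = ∫⁻ x, φ x⁻¹ ∂μ := by
  rw [← lintegral_mul_left_eq_self _ g]
  simp only [mul_inv_rev, inv_mul_cancel_right]

end RightTranslation

theorem Subgroup.dite_inv_mem_inv {G X : Type*} [Group G] [Zero X] (H : Subgroup G)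
    (F : H → X) (a : G) :
    (if h : a⁻¹ ∈ H then F ⟨a⁻¹, h⟩⁻¹ else 0) = if h : a ∈ H then F ⟨a, h⟩ else 0 := by
  by_cases ha : a ∈ H
  · rw [dif_pos (H.inv_mem ha), dif_pos ha]
    congr 1
    ext
    simp
  · rw [dif_neg (by simpa using ha), dif_neg ha]

theorem lintegral_matrix_coefficient_single_coset_general
    {G : Type*} [Group G] [TopologicalSpace G] [IsTopologicalGroup G]
    [MeasurableSpace G] [BorelSpace G]
    (μ : Measure G) [μ.IsHaarMeasure]
    (H : Subgroup G)
    {V : Type*} [NormedAddCommGroup V] [InnerProductSpace ℂ V]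
    (π : ↥H →* (V ≃ₗᵢ[ℂ] V))
    (Δ : G → ENNReal)
    (hΔ : ∀ g : G, ∀ E : Set G, MeasurableSet E →
      μ ((fun x => x * g) '' E) = Δ g * μ E)
    (p : ℝ) (hp : 1 ≤ p)
    (ti tj : G) (w w' : V)
    (f : G → V)
    (hf : f = fun g =>
      if hg : ti⁻¹ * g ∈ H then (π (⟨ti⁻¹ * g, hg⟩⁻¹)) w else 0) :
    ∫⁻ g, ((‖(inner ℂ (f (g⁻¹ * tj)) w' : ℂ)‖₊ : ENNReal)) ^ p ∂μ
      = Δ ti⁻¹ *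
        ∫⁻ g in (H : Set G),
          (if hg : g ∈ H then ((‖(inner ℂ ((π ⟨g, hg⟩) w) w' : ℂ)‖₊ : ENNReal)) ^ p else 0) ∂μ := by
  set ψ : G → ENNReal := fun x =>
    if hg : x ∈ H then ((‖(inner ℂ ((π ⟨x, hg⟩) w) w' : ℂ)‖₊ : ENNReal)) ^ p else 0
  have hf_inv (g : G) : f g⁻¹ = if h : g * ti ∈ H then π ⟨g * ti, h⟩ w else 0 := by
    simpa only [hf, mul_inv_rev, inv_inv] using
      H.dite_inv_mem_inv (fun h => π h w) (g * ti)
  have hψ_supp : Function.support ψ ⊆ H := fun x hx => by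
    by_contra h
    exact hx (dif_neg h)
  calc ∫⁻ g, ((‖(inner ℂ (f (g⁻¹ * tj)) w' : ℂ)‖₊ : ENNReal)) ^ p ∂μ
      = ∫⁻ g, ψ (g * ti) ∂μ := by
        rw [lintegral_inv_mul_eq_lintegral_inv
          (fun v => ((‖(inner ℂ (f v) w' : ℂ)‖₊ : ENNReal)) ^ p)]
        refine lintegral_congr fun g => ?_
        rw [hf_inv, apply_dite (fun v => ((‖(inner ℂ v w' : ℂ)‖₊ : ENNReal)) ^ p)]
        simp only [inner_zero_left, nnnorm_zero, ENNReal.coe_zero,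
          ENNReal.zero_rpow_of_pos (by linarith : 0 < p), ψ]
    _ = Δ ti⁻¹ * ∫⁻ g, ψ g ∂μ := lintegral_mul_right_eq_mul_of_image_mul_right (hΔ ti⁻¹) ψ
    _ = Δ ti⁻¹ * ∫⁻ g in (H : Set G), ψ g ∂μ := by rw [setLIntegral_eq_of_support_subset hψ_supp]

/-- Key computation in the proof of Proposition 1.2: for a unitary representation `π`
of an open subgroup `H` of `G`, the function `f` supported on the coset `t_i • H` with
`f g = π ((t_i⁻¹ g)⁻¹) w` there satisfies
`∫_G |⟨f (g⁻¹ t_j), w'⟩|^p dμ_G(g) = Δ(t_i⁻¹) • ∫_H |⟨π(h) w, w'⟩|^p dμ_H(h)`,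
where `Δ` is the modular function of `G` and `μ_H` the restriction of `μ_G` to `H`. -/
theorem lintegral_matrix_coefficient_single_coset
    {G : Type*} [Group G] [TopologicalSpace G] [IsTopologicalGroup G]
    [LocallyCompactSpace G] [T2Space G] [MeasurableSpace G] [BorelSpace G]
    (μ : Measure G) [μ.IsHaarMeasure]
    (H : Subgroup G) (hH : IsOpen (H : Set G))
    {V : Type*} [NormedAddCommGroup V] [InnerProductSpace ℂ V] [CompleteSpace V]
    (π : ↥H →* (V ≃ₗᵢ[ℂ] V))
    (hπcont : ∀ v : V, Continuous fun h : ↥H => π h v)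
    (Δ : G → ENNReal)
    (hΔ : ∀ g : G, ∀ E : Set G, MeasurableSet E →
      μ ((fun x => x * g) '' E) = Δ g * μ E)
    (p : ℝ) (hp : 1 ≤ p)
    (ti tj : G) (w w' : V)
    (f : G → V)
    (hf : f = fun g =>
      if hg : ti⁻¹ * g ∈ H then (π (⟨ti⁻¹ * g, hg⟩⁻¹)) w else 0) :
    ∫⁻ g, ((‖(inner ℂ (f (g⁻¹ * tj)) w' : ℂ)‖₊ : ENNReal)) ^ p ∂μ
      = Δ ti⁻¹ *
        ∫⁻ g in (H : Set G),
          (if hg : g ∈ H then ((‖(inner ℂ ((π ⟨g, hg⟩) w) w' : ℂ)‖₊ : ENNReal)) ^ p else 0) ∂μ :=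
  lintegral_matrix_coefficient_single_coset_general μ H π Δ hΔ p hp ti tj w w' f hf
end

section
/- Let G be a topological group, H an open subgroup of G, T ⊆ G a set of representatives of the left cosets of H, and (π, V) a unitary representation of H. Let f : G → V satisfy the equivariance condition f(gh) = π(h⁻¹) f(g) for all g ∈ G and h ∈ H, and suppose ∑_{t ∈ T} ‖f(t)‖² < ∞. Then for every g ∈ G, ∑_{t ∈ T} ‖f(g⁻¹ t)‖² = ∑_{t ∈ T} ‖f(t)‖². In particular, the left translation action (g · f)(g') = f(g⁻¹ g') preserves the norm ( ∑_{t ∈ T} ‖f(t)‖² )^{1/2} on equivariant square-summable functions, i.e., the induced representation acts unitarily. -/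
/-!
Since `π` acts by isometries, equivariance makes `x ↦ ‖f x‖` constant on the left cosets `xH`,
so `‖f‖²` descends to `G ⧸ H`. A transversal `T` is in bijection with `G ⧸ H`, and left
translation by `g⁻¹` permutes `G ⧸ H`, so it leaves the sum over `T` unchanged.
-/

namespace Subgroup.IsComplement

variable {G : Type*} [Group G] {H : Subgroup G} {S : Set G}
  {α : Type*} [AddCommMonoid α] [TopologicalSpace α]

theorem of_existsUnique_mem_inv_mul_mem (hS : ∀ g : G, ∃! s : G, s ∈ S ∧ s⁻¹ * g ∈ H) :
    IsComplement S H :=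
  isComplement_iff_existsUnique_inv_mul_mem.2 fun g =>
    let ⟨s, ⟨hsS, hsg⟩, hs⟩ := hS g
    ⟨⟨s, hsS⟩, hsg, fun s' hs' => Subtype.ext (hs s' ⟨s'.2, hs'⟩)⟩

theorem tsum_smul_mk (hS : IsComplement S H) (φ : G ⧸ H → α) (g : G) :
    ∑' s : S, φ (g • (s : G ⧸ H)) = ∑' s : S, φ s := by
  let e : S ≃ G ⧸ H := hS.leftQuotientEquiv.symm
  calc ∑' s : S, φ (g • (s : G ⧸ H))
      = ∑' q : G ⧸ H, φ (g • q) := e.tsum_eq (fun q => φ (g • q))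
    _ = ∑' q : G ⧸ H, φ q := (MulAction.toPerm g).tsum_eq φ
    _ = ∑' s : S, φ s := (e.tsum_eq φ).symm

theorem tsum_comp_mul_left (hS : IsComplement S H) {F : G → α}
    (hF : ∀ (x : G) (h : H), F (x * h) = F x) (g : G) :
    ∑' s : S, F (g * s) = ∑' s : S, F s := by
  have hF_coset : ∀ x y : G, x⁻¹ * y ∈ H → F x = F y := fun x y hxy => by
    simpa using (hF x ⟨_, hxy⟩).symm
  exact hS.tsum_smul_mk (Quotient.lift F fun x y hxy =>
    hF_coset x y (QuotientGroup.leftRel_apply.mp hxy)) g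

end Subgroup.IsComplement

theorem nnnorm_mul_of_equivariant {G : Type*} [Group G] {H : Subgroup G}
    {R E : Type*} [Semiring R] [SeminormedAddCommGroup E] [Module R E]
    (π : H →* (E ≃ₗᵢ[R] E)) {f : G → E} (hf : ∀ (g : G) (h : H), f (g * h) = π h⁻¹ (f g))
    (g : G) (h : H) : ‖f (g * h)‖₊ = ‖f g‖₊ := by
  rw [hf, LinearIsometryEquiv.nnnorm_map]

theorem induced_representation_unitary_general
    {G : Type*} [Group G]
    (H : Subgroup G)
    (T : Set G) (hT : ∀ g : G, ∃! t : G, t ∈ T ∧ t⁻¹ * g ∈ H)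
    {V : Type*} [NormedAddCommGroup V] [InnerProductSpace ℂ V]
    (π : ↥H →* (V ≃ₗᵢ[ℂ] V))
    (f : G → V)
    (hfequiv : ∀ g : G, ∀ h : ↥H, f (g * h) = π h⁻¹ (f g)) :
    ∀ g : G, ∑' t : T, ((‖f (g⁻¹ * t)‖₊ : ENNReal)) ^ 2
      = ∑' t : T, ((‖f t‖₊ : ENNReal)) ^ 2 := by
  intro g
  have hS : Subgroup.IsComplement T H :=
    .of_existsUnique_mem_inv_mul_mem hT
  exact hS.tsum_comp_mul_left (F := fun x => ((‖f x‖₊ : ENNReal)) ^ 2)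
    (fun x h => by rw [nnnorm_mul_of_equivariant π hfequiv]) g⁻¹

/-- Left translation preserves the norm of equivariant square-summable functions:
if `f : G → V` is equivariant for a unitary representation `π` of an open subgroup `H`
and `∑_{t ∈ T} ‖f t‖² < ∞` over a set `T` of left coset representatives, then for every
`g ∈ G` we have `∑_{t ∈ T} ‖f (g⁻¹ t)‖² = ∑_{t ∈ T} ‖f t‖²`; i.e. the induced
representation acts unitarily. -/
theorem induced_representation_unitary
    {G : Type*} [Group G] [TopologicalSpace G] [IsTopologicalGroup G]
    (H : Subgroup G) (hH : IsOpen (H : Set G))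
    (T : Set G) (hT : ∀ g : G, ∃! t : G, t ∈ T ∧ t⁻¹ * g ∈ H)
    {V : Type*} [NormedAddCommGroup V] [InnerProductSpace ℂ V] [CompleteSpace V]
    (π : ↥H →* (V ≃ₗᵢ[ℂ] V))
    (hπcont : ∀ v : V, Continuous fun h : ↥H => π h v)
    (f : G → V)
    (hfequiv : ∀ g : G, ∀ h : ↥H, f (g * h) = π h⁻¹ (f g))
    (hfsum : ∑' t : T, ((‖f t‖₊ : ENNReal)) ^ 2 < ⊤) :
    ∀ g : G, ∑' t : T, ((‖f (g⁻¹ * t)‖₊ : ENNReal)) ^ 2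
      = ∑' t : T, ((‖f t‖₊ : ENNReal)) ^ 2 :=
  induced_representation_unitary_general H T hT π f hfequiv
end

section
/- Let G be a locally compact Hausdorff topological group with left Haar measure μ_G, let H be an open subgroup of G with Haar measure μ_H given by restricting μ_G, let T ⊆ G be a set of representatives of the left cosets of H, and let (π, V) be a unitary representation of H. Fix p ∈ [1, ∞). Let f, f' : G → V satisfy the equivariance condition f(gh) = π(h⁻¹) f(g) (and likewise for f') for all g ∈ G, h ∈ H, and suppose that f(t) ≠ 0 and f'(t) ≠ 0 for only finitely many t ∈ T. Assume that for all t, t' ∈ T, the matrix coefficient h ↦ ⟨π(h) f(t), f'(t')⟩ lies in L^p(H, μ_H). Then the matrix coefficient of the induced representation, namely the function g ↦ ∑_{t ∈ T} ⟨f(g⁻¹ t), f'(t)⟩, lies in L^p(G, μ_G). (This is Proposition 1.2: a representation induced from an L^p-representation of an open subgroup is an L^p-representation, stated at the level of matrix coefficients on the dense subspace of finitely supported equivariant functions.) -/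
/-!
Only finitely many `t' ∈ T` have `f' t' ≠ 0`, and equivariance moves `f (g⁻¹ t')` back to the
representative `t` of its coset, so the induced matrix coefficient is a finite sum of the
functions `g ↦ c (t'⁻¹ g t)`, where `c` is an `H`-matrix coefficient extended by zero to `G`.
Left translation preserves `μ`. Right translation by `t` turns `μ` into another Haar measure,
which without regularity need not be a multiple of `μ`; but two Haar measures are
proportional on open sets, and since `c` is continuous on the open subgroup `H` the superlevel
sets of `‖c‖ ^ p` are open, so the layer-cake formula transfers the `L^p` bound.
-/

open MeasureTheory
open scoped Classical ENNReal

open Set Function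

theorem ContinuousOn.lowerSemicontinuous_of_support_subset {α : Type*} [TopologicalSpace α]
    {F : α → ℝ} {s : Set α} (hs : IsOpen s) (hF : ContinuousOn F s)
    (hsupp : support F ⊆ s) (hF0 : 0 ≤ F) : LowerSemicontinuous F := by
  intro x y hy
  by_cases hx : x ∈ s
  · exact (hF.continuousAt (hs.mem_nhds hx)).eventually (lt_mem_nhds hy)
  · have hFx : F x = 0 := notMem_support.1 fun h => hx (hsupp h)
    exact Filter.Eventually.of_forall fun z => (hFx ▸ hy).trans_le (hF0 z)

namespace MeasureTheory

variable {G : Type*} [Group G] [TopologicalSpace G] [IsTopologicalGroup G]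
  [LocallyCompactSpace G] [MeasurableSpace G] [BorelSpace G]

theorem Measure.lintegral_isHaarMeasure_eq_mul_of_lowerSemicontinuous
    (μ' μ : Measure G) [μ.IsHaarMeasure] [μ'.IsHaarMeasure] {F : G → ℝ}
    (hF : LowerSemicontinuous F) (hF0 : 0 ≤ F) :
    ∫⁻ g, ENNReal.ofReal (F g) ∂μ' =
      haarScalarFactor μ' μ * ∫⁻ g, ENNReal.ofReal (F g) ∂μ := by
  have hF0' : ∀ ν : Measure G, 0 ≤ᵐ[ν] F := fun ν => Filter.Eventually.of_forall hF0
  rw [lintegral_eq_lintegral_meas_lt μ' (hF0' μ') hF.measurable.aemeasurable,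
    lintegral_eq_lintegral_meas_lt μ (hF0' μ) hF.measurable.aemeasurable,
    ← lintegral_const_mul' _ _ ENNReal.coe_ne_top]
  congr! 2 with t
  exact Measure.measure_isHaarMeasure_eq_smul_of_isOpen μ' μ (hF.isOpen_preimage t)

theorem MemLp.of_isHaarMeasure_of_continuousOn
    {E : Type*} [NormedAddCommGroup E] [SecondCountableTopologyEither G E]
    (μ' μ : Measure G) [μ.IsHaarMeasure] [μ'.IsHaarMeasure] {p : ℝ≥0∞}
    (hp0 : p ≠ 0) (hptop : p ≠ ∞) {C : G → E} {s : Set G} (hs : IsOpen s)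
    (hC : ContinuousOn C s) (hsupp : support C ⊆ s) (hCμ : MemLp C p μ) : MemLp C p μ' := by
  have hmeas : AEStronglyMeasurable C μ' := by
    rw [← indicator_eq_self.2 hsupp, aestronglyMeasurable_indicator_iff hs.measurableSet]
    exact hC.aestronglyMeasurable hs.measurableSet
  have hlsc : LowerSemicontinuous fun g => ‖C g‖ ^ p.toReal := by
    refine (hC.norm.rpow_const fun _ _ => Or.inr ENNReal.toReal_nonneg
      ).lowerSemicontinuous_of_support_subset hs (fun g hg => hsupp fun hCg => hg ?_)
      fun _ => by positivity
    simp only [hCg, norm_zero, Real.zero_rpow (ENNReal.toReal_pos hp0 hptop).ne']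
  have hofReal : ∀ g, ‖C g‖ₑ ^ p.toReal = ENNReal.ofReal (‖C g‖ ^ p.toReal) := by
    intro g
    rw [← ofReal_norm, ENNReal.ofReal_rpow_of_nonneg (norm_nonneg _) ENNReal.toReal_nonneg]
  refine ⟨hmeas, ?_⟩
  have hfin := (eLpNorm_lt_top_iff_lintegral_rpow_enorm_lt_top hp0 hptop).1 hCμ.2
  rw [eLpNorm_lt_top_iff_lintegral_rpow_enorm_lt_top hp0 hptop]
  simp only [hofReal] at hfin ⊢
  rw [Measure.lintegral_isHaarMeasure_eq_mul_of_lowerSemicontinuous μ' μ hlsc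
    fun _ => by positivity]
  exact ENNReal.mul_lt_top ENNReal.coe_lt_top hfin

theorem MemLp.comp_mul_mul_of_continuousOn
    {E : Type*} [NormedAddCommGroup E] [SecondCountableTopologyEither G E]
    {μ : Measure G} [μ.IsHaarMeasure] {p : ℝ≥0∞} (hp0 : p ≠ 0) (hptop : p ≠ ∞)
    {C : G → E} {s : Set G} (hs : IsOpen s) (hC : ContinuousOn C s) (hsupp : support C ⊆ s)
    (hCμ : MemLp C p μ) (a b : G) : MemLp (fun g => C (a * g * b)) p μ := by
  have hright : MemLp (fun g => C (g * b)) p μ :=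
    (Homeomorph.mulRight b).measurableEmbedding.memLp_map_measure_iff.1
      (hCμ.of_isHaarMeasure_of_continuousOn (Measure.map (· * b) μ) μ hp0 hptop hs hC hsupp)
  exact hright.comp_measurePreserving (measurePreserving_mul_left μ a)

end MeasureTheory

section InducedRepresentation

variable {G : Type*} [Group G] {H : Subgroup G}
  {V : Type*} [NormedAddCommGroup V] [InnerProductSpace ℂ V]

noncomputable def matrixCoeff (π : H →* (V ≃ₗᵢ[ℂ] V)) (v w : V) (g : G) : ℂ :=
  if hg : g ∈ H then inner ℂ (π ⟨g, hg⟩ v) w else 0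

theorem support_matrixCoeff_subset (π : H →* (V ≃ₗᵢ[ℂ] V)) (v w : V) :
    support (matrixCoeff π v w) ⊆ H :=
  fun _ hg => by_contra fun hgH => hg (dif_neg hgH)

theorem continuousOn_matrixCoeff [TopologicalSpace G] {π : H →* (V ≃ₗᵢ[ℂ] V)}
    (hπ : ∀ v : V, Continuous fun h : H => π h v) (v w : V) :
    ContinuousOn (matrixCoeff π v w) H := by
  rw [continuousOn_iff_continuous_domRestrict]
  have hres : (H : Set G).domRestrict (matrixCoeff π v w) = fun h : H => inner ℂ (π h v) w :=
    funext fun h => dif_pos h.2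
  rw [hres]
  exact (hπ v).inner continuous_const

-- Only the representative `t` of `x H` contributes, since `x⁻¹ * t ∈ H ↔ t⁻¹ * x ∈ H`.
theorem inner_eq_sum_matrixCoeff {π : H →* (V ≃ₗᵢ[ℂ] V)} {T : Set G}
    (hT : ∀ g : G, ∃! t : G, t ∈ T ∧ t⁻¹ * g ∈ H) {f : G → V}
    (hf : ∀ g : G, ∀ h : H, f (g * h) = π h⁻¹ (f g)) {S : Finset T}
    (hS : {t : T | f t ≠ 0} ⊆ S) (x : G) (w : V) :
    inner ℂ (f x) w = ∑ t ∈ S, matrixCoeff π (f t) w (x⁻¹ * t) := by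
  obtain ⟨t₀, ⟨ht₀T, ht₀x⟩, huniq⟩ := hT x
  have hx : x⁻¹ * t₀ ∈ H := by simpa using H.inv_mem ht₀x
  have hfx : f x = π ⟨x⁻¹ * t₀, hx⟩ (f t₀) := by
    calc f x = f (t₀ * (⟨t₀⁻¹ * x, ht₀x⟩ : H)) := by simp
      _ = π ⟨x⁻¹ * t₀, hx⟩ (f t₀) := by rw [hf]; congr; ext; simp
  rw [Finset.sum_eq_single ⟨t₀, ht₀T⟩]
  · rw [matrixCoeff, dif_pos hx, hfx]
  · intro t _ ht
    refine dif_neg fun hmem => ht (Subtype.ext (huniq t ⟨t.2, ?_⟩))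
    simpa using H.inv_mem hmem
  · intro ht₀S
    have hft₀ : f t₀ = 0 := not_not.1 fun hne => ht₀S (hS hne)
    simp [matrixCoeff, hft₀]

end InducedRepresentation

theorem induced_representation_Lp_general
    {G : Type*} [Group G] [TopologicalSpace G] [IsTopologicalGroup G]
    [LocallyCompactSpace G] [MeasurableSpace G] [BorelSpace G]
    (μ : Measure G) [μ.IsHaarMeasure]
    (H : Subgroup G) (hH : IsOpen (H : Set G))
    (T : Set G) (hT : ∀ g : G, ∃! t : G, t ∈ T ∧ t⁻¹ * g ∈ H)
    {V : Type*} [NormedAddCommGroup V] [InnerProductSpace ℂ V]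
    (π : ↥H →* (V ≃ₗᵢ[ℂ] V))
    (hπcont : ∀ v : V, Continuous fun h : ↥H => π h v)
    (p : ℝ) (hp : 1 ≤ p)
    (f f' : G → V)
    (hfequiv : ∀ g : G, ∀ h : ↥H, f (g * h) = π h⁻¹ (f g))
    (hfsupp : {t : T | f t ≠ 0}.Finite)
    (hf'supp : {t : T | f' t ≠ 0}.Finite)
    (hLp : ∀ t ∈ T, ∀ t' ∈ T,
      MemLp (fun g : G => if hg : g ∈ H then (inner ℂ ((π ⟨g, hg⟩) (f t)) (f' t') : ℂ) else 0)
        (ENNReal.ofReal p) (μ.restrict (H : Set G))) :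
    MemLp (fun g : G => ∑' t : T, (inner ℂ (f (g⁻¹ * t)) (f' t) : ℂ))
      (ENNReal.ofReal p) μ := by
  have hp0 : ENNReal.ofReal p ≠ 0 := (ENNReal.ofReal_pos.2 (by linarith)).ne'
  have hcoeff : ∀ t t' : T, MemLp (matrixCoeff π (f t) (f' t')) (ENNReal.ofReal p) μ := by
    intro t t'
    rw [← indicator_eq_self.2 (support_matrixCoeff_subset π (f t) (f' t')),
      memLp_indicator_iff_restrict hH.measurableSet]
    exact hLp t t.2 t' t'.2
  have hsum : (fun g : G => ∑' t' : T, (inner ℂ (f (g⁻¹ * t')) (f' t') : ℂ)) = fun g =>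
      ∑ t' ∈ hf'supp.toFinset, ∑ t ∈ hfsupp.toFinset,
        matrixCoeff π (f t) (f' t') ((t' : G)⁻¹ * g * t) := by
    funext g
    rw [tsum_eq_sum fun t' ht' => by
      rw [not_not.1 (mt hf'supp.mem_toFinset.2 ht'), inner_zero_right]]
    refine Finset.sum_congr rfl fun t' _ => ?_
    simp only [inner_eq_sum_matrixCoeff hT hfequiv hfsupp.coe_toFinset.ge, mul_inv_rev, inv_inv]
  rw [hsum]
  refine memLp_finsetSum _ fun t' _ => memLp_finsetSum _ fun t _ => ?_
  exact (hcoeff t t').comp_mul_mul_of_continuousOn hp0 ENNReal.ofReal_ne_top hH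
    (continuousOn_matrixCoeff hπcont _ _) (support_matrixCoeff_subset π _ _) _ _

/-- Proposition 1.2, at the level of matrix coefficients: if `H` is an open subgroup of
a locally compact group `G`, `π` a unitary representation of `H`, and `f, f'` are
equivariant functions supported on finitely many cosets whose "component" matrix
coefficients `h ↦ ⟨π(h) f(t), f'(t')⟩` lie in `L^p(H)`, then the matrix coefficient of
the induced representation, `g ↦ ∑_{t ∈ T} ⟨f(g⁻¹ t), f'(t)⟩`, lies in `L^p(G)`. -/
theorem induced_representation_Lp
    {G : Type*} [Group G] [TopologicalSpace G] [IsTopologicalGroup G]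
    [LocallyCompactSpace G] [T2Space G] [MeasurableSpace G] [BorelSpace G]
    (μ : Measure G) [μ.IsHaarMeasure]
    (H : Subgroup G) (hH : IsOpen (H : Set G))
    (T : Set G) (hT : ∀ g : G, ∃! t : G, t ∈ T ∧ t⁻¹ * g ∈ H)
    {V : Type*} [NormedAddCommGroup V] [InnerProductSpace ℂ V] [CompleteSpace V]
    (π : ↥H →* (V ≃ₗᵢ[ℂ] V))
    (hπcont : ∀ v : V, Continuous fun h : ↥H => π h v)
    (p : ℝ) (hp : 1 ≤ p)
    (f f' : G → V)
    (hfequiv : ∀ g : G, ∀ h : ↥H, f (g * h) = π h⁻¹ (f g))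
    (hf'equiv : ∀ g : G, ∀ h : ↥H, f' (g * h) = π h⁻¹ (f' g))
    (hfsupp : {t : T | f t ≠ 0}.Finite)
    (hf'supp : {t : T | f' t ≠ 0}.Finite)
    (hLp : ∀ t ∈ T, ∀ t' ∈ T,
      MemLp (fun g : G => if hg : g ∈ H then (inner ℂ ((π ⟨g, hg⟩) (f t)) (f' t') : ℂ) else 0)
        (ENNReal.ofReal p) (μ.restrict (H : Set G))) :
    MemLp (fun g : G => ∑' t : T, (inner ℂ (f (g⁻¹ * t)) (f' t) : ℂ))
      (ENNReal.ofReal p) μ :=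
  induced_representation_Lp_general μ H hH T hT π hπcont p hp f f' hfequiv hfsupp hf'supp hLp
end

section
/- Let G be a locally compact Hausdorff topological group with left Haar measure μ_G, let H be an open subgroup of G with Haar measure μ_H given by restricting μ_G, let T ⊆ G be a set of representatives of the left cosets of H, and let (π, V) be a unitary representation of H. Fix p ∈ [1, ∞). Let f, f' : G → V be equivariant (f(gh) = π(h⁻¹) f(g) for all g ∈ G, h ∈ H, and likewise for f'), with f(t) ≠ 0 and f'(t) ≠ 0 for only finitely many t ∈ T. Assume that for all t, t' ∈ T and every ε > 0, the matrix coefficient h ↦ ⟨π(h) f(t), f'(t')⟩ lies in L^{p+ε}(H, μ_H). Then for every ε > 0, the function g ↦ ∑_{t ∈ T} ⟨f(g⁻¹ t), f'(t)⟩ lies in L^{p+ε}(G, μ_G). (This is the L^{p+} case of Proposition 1.2: inducing an L^{p+}-representation from an open subgroup yields an L^{p+}-representation.) -/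
open MeasureTheory
open scoped Classical ENNReal

/-!
An equivariant `f` is determined by its values on `T`: `f x = π(x⁻¹ s) (f s)` for the
representative `s` of `x H`. Hence `⟨f (g⁻¹ t'), f' t'⟩` is a finite sum over `s` of the
`H`-matrix coefficients `⟨π(·) (f s), f' t'⟩`, extended by zero to `G`, evaluated at
`t'⁻¹ g s`, and the induced coefficient is a finite sum of two-sided translates of
`L^{p+ε}` functions. Left translation preserves `μ`; right translation rescales it by a
constant on open sets, which suffices because the coefficients are continuous on the open
subgroup `H`, so their superlevel sets are open.
-/

section HaarTranslation

variable {G : Type*} [Group G] [TopologicalSpace G] [IsTopologicalGroup G]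
  [LocallyCompactSpace G] [MeasurableSpace G] [BorelSpace G]

/- Without regularity, two Haar measures are only known to be proportional on open sets, hence
the layer-cake formula and lower semicontinuity. -/
theorem LowerSemicontinuous.lintegral_ofReal_eq_haarScalarFactor_mul (μ' μ : Measure G)
    [μ.IsHaarMeasure] [μ'.IsHaarMeasure] {φ : G → ℝ} (hφ : LowerSemicontinuous φ)
    (hφ0 : 0 ≤ φ) :
    ∫⁻ x, ENNReal.ofReal (φ x) ∂μ'
      = Measure.haarScalarFactor μ' μ * ∫⁻ x, ENNReal.ofReal (φ x) ∂μ := by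
  rw [lintegral_eq_lintegral_meas_lt μ' (.of_forall hφ0) hφ.measurable.aemeasurable,
    lintegral_eq_lintegral_meas_lt μ (.of_forall hφ0) hφ.measurable.aemeasurable,
    ← lintegral_const_mul' _ _ ENNReal.coe_ne_top]
  refine setLIntegral_congr_fun measurableSet_Ioi fun t _ => ?_
  exact Measure.measure_isHaarMeasure_eq_smul_of_isOpen μ' μ (hφ.isOpen_preimage t)

theorem MemLp.comp_mul_right_of_lowerSemicontinuous {E : Type*} [NormedAddCommGroup E]
    {μ : Measure G} [μ.IsHaarMeasure] {p : ℝ≥0∞} {ψ : G → E} (hψm : StronglyMeasurable ψ)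
    (hψ : MemLp ψ p μ) (hp0 : p ≠ 0) (hp : p ≠ ∞)
    (hlsc : LowerSemicontinuous fun x => ‖ψ x‖ ^ p.toReal) (b : G) :
    MemLp (fun x => ψ (x * b)) p μ := by
  refine ⟨(hψm.comp_measurable (measurable_mul_const b)).aestronglyMeasurable, ?_⟩
  have hfin := (eLpNorm_lt_top_iff_lintegral_rpow_enorm_lt_top hp0 hp).1 hψ.2
  have hofReal : ∀ x, ‖ψ x‖ₑ ^ p.toReal = ENNReal.ofReal (‖ψ x‖ ^ p.toReal) := fun x => by
    rw [← ENNReal.ofReal_rpow_of_nonneg (norm_nonneg _) ENNReal.toReal_nonneg, ofReal_norm]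
  simp only [hofReal] at hfin
  rw [eLpNorm_lt_top_iff_lintegral_rpow_enorm_lt_top hp0 hp]
  calc ∫⁻ x, ‖ψ (x * b)‖ₑ ^ p.toReal ∂μ
      = ∫⁻ x, ENNReal.ofReal (‖ψ x‖ ^ p.toReal) ∂(μ.map (· * b)) := by
        simp only [hofReal]
        rw [lintegral_map hlsc.measurable.ennreal_ofReal (measurable_mul_const b)]
    _ = Measure.haarScalarFactor (μ.map (· * b)) μ
          * ∫⁻ x, ENNReal.ofReal (‖ψ x‖ ^ p.toReal) ∂μ :=
        hlsc.lintegral_ofReal_eq_haarScalarFactor_mul _ _ fun _ => by positivity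
    _ < ∞ := ENNReal.mul_lt_top ENNReal.coe_lt_top hfin

end HaarTranslation

theorem lowerSemicontinuous_of_continuousOn_of_eq_zero {X : Type*} [TopologicalSpace X]
    {U : Set X} (hU : IsOpen U) {φ : X → ℝ} (hφ : ContinuousOn φ U) (hφ0 : ∀ x ∉ U, φ x = 0)
    (hnn : 0 ≤ φ) :
    LowerSemicontinuous φ := by
  intro x
  by_cases hx : x ∈ U
  · exact (hφ.continuousAt (hU.mem_nhds hx)).lowerSemicontinuousAt
  · intro y hy
    rw [hφ0 x hx] at hy
    exact .of_forall fun z => hy.trans_le (hnn z)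

section InducedRepresentation

variable {G : Type*} [Group G] {H : Subgroup G}
  {V : Type*} [NormedAddCommGroup V] [InnerProductSpace ℂ V]

noncomputable def extendedMatrixCoeff (π : ↥H →* (V ≃ₗᵢ[ℂ] V)) (v w : V) (g : G) : ℂ :=
  if hg : g ∈ H then inner ℂ ((π ⟨g, hg⟩) v) w else 0

theorem support_extendedMatrixCoeff_subset (π : ↥H →* (V ≃ₗᵢ[ℂ] V)) (v w : V) :
    Function.support (extendedMatrixCoeff π v w) ⊆ H := fun g hg => by
  by_contra hgH
  exact hg (dif_neg hgH)

theorem continuousOn_extendedMatrixCoeff [TopologicalSpace G] {π : ↥H →* (V ≃ₗᵢ[ℂ] V)}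
    (hπ : ∀ v : V, Continuous fun h : ↥H => π h v) (v w : V) :
    ContinuousOn (extendedMatrixCoeff π v w) H := by
  rw [continuousOn_iff_continuous_domRestrict]
  have hrestrict : (H : Set G).domRestrict (extendedMatrixCoeff π v w)
      = fun h : ↥H => inner ℂ (π h v) w := funext fun h => dif_pos h.2
  rw [hrestrict]
  exact (hπ v).inner continuous_const

theorem measurable_extendedMatrixCoeff [TopologicalSpace G] [MeasurableSpace G]
    [OpensMeasurableSpace G] (hH : IsOpen (H : Set G)) {π : ↥H →* (V ≃ₗᵢ[ℂ] V)}
    (hπ : ∀ v : V, Continuous fun h : ↥H => π h v) (v w : V) :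
    Measurable (extendedMatrixCoeff π v w) :=
  Measurable.dite ((hπ v).inner continuous_const).measurable measurable_const hH.measurableSet

theorem lowerSemicontinuous_norm_extendedMatrixCoeff_rpow [TopologicalSpace G]
    (hH : IsOpen (H : Set G)) {π : ↥H →* (V ≃ₗᵢ[ℂ] V)}
    (hπ : ∀ v : V, Continuous fun h : ↥H => π h v) (v w : V) {r : ℝ} (hr : 0 < r) :
    LowerSemicontinuous fun g => ‖extendedMatrixCoeff π v w g‖ ^ r := by
  refine lowerSemicontinuous_of_continuousOn_of_eq_zero hH
    ((continuousOn_extendedMatrixCoeff hπ v w).norm.rpow_const fun _ _ => .inr hr.le)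
    (fun g hg => ?_) fun g => by positivity
  rw [Function.notMem_support.1 fun hg' => hg (support_extendedMatrixCoeff_subset π v w hg'),
    norm_zero, Real.zero_rpow hr.ne']

theorem apply_eq_of_inv_mul_mem {π : ↥H →* (V ≃ₗᵢ[ℂ] V)} {f : G → V}
    (hf : ∀ g : G, ∀ h : ↥H, f (g * h) = π h⁻¹ (f g)) {x s : G} (hxs : x⁻¹ * s ∈ H) :
    f x = π ⟨x⁻¹ * s, hxs⟩ (f s) := by
  have hsx : s⁻¹ * x ∈ H := by simpa using H.inv_mem hxs
  calc f x = f (s * (⟨s⁻¹ * x, hsx⟩ : ↥H)) := by simp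
    _ = π ⟨x⁻¹ * s, hxs⟩ (f s) := by
        rw [hf]
        congr
        ext
        simp

theorem eq_sum_of_equivariant {T : Set G} (hT : ∀ g : G, ∃! t : G, t ∈ T ∧ t⁻¹ * g ∈ H)
    {π : ↥H →* (V ≃ₗᵢ[ℂ] V)} {f : G → V} (hf : ∀ g : G, ∀ h : ↥H, f (g * h) = π h⁻¹ (f g))
    {S : Finset T} (hS : ∀ t : T, f t ≠ 0 → t ∈ S) (x : G) :
    f x = ∑ s ∈ S, if hs : x⁻¹ * s ∈ H then π ⟨x⁻¹ * s, hs⟩ (f s) else 0 := by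
  obtain ⟨s₀, ⟨hs₀T, hs₀x⟩, huniq⟩ := hT x
  have hmem_iff : ∀ s : T, x⁻¹ * s ∈ H ↔ s = ⟨s₀, hs₀T⟩ := fun s => by
    constructor
    · intro hs
      exact Subtype.ext (huniq s ⟨s.2, by simpa using H.inv_mem hs⟩)
    · rintro rfl
      simpa using H.inv_mem hs₀x
  have hterm : ∀ s ∈ S, (if hs : x⁻¹ * s ∈ H then π ⟨x⁻¹ * s, hs⟩ (f s) else 0)
      = if s = ⟨s₀, hs₀T⟩ then f x else 0 := fun s _ => by
    by_cases hs : x⁻¹ * s ∈ H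
    · rw [dif_pos hs, if_pos ((hmem_iff s).1 hs), apply_eq_of_inv_mul_mem hf hs]
    · rw [dif_neg hs, if_neg (mt (hmem_iff s).2 hs)]
  rw [Finset.sum_congr rfl hterm, Finset.sum_ite_eq']
  split_ifs with hs₀S
  · rfl
  · have hs₀ : f s₀ = 0 := not_not.1 (mt (hS ⟨s₀, hs₀T⟩) hs₀S)
    rw [apply_eq_of_inv_mul_mem hf ((hmem_iff ⟨s₀, hs₀T⟩).2 rfl), hs₀, map_zero]

theorem inner_eq_sum_extendedMatrixCoeff {T : Set G}
    (hT : ∀ g : G, ∃! t : G, t ∈ T ∧ t⁻¹ * g ∈ H) {π : ↥H →* (V ≃ₗᵢ[ℂ] V)} {f : G → V}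
    (hf : ∀ g : G, ∀ h : ↥H, f (g * h) = π h⁻¹ (f g)) {S : Finset T}
    (hS : ∀ t : T, f t ≠ 0 → t ∈ S) (x : G) (w : V) :
    inner ℂ (f x) w = ∑ s ∈ S, extendedMatrixCoeff π (f s) w (x⁻¹ * s) := by
  rw [eq_sum_of_equivariant hT hf hS x, sum_inner]
  refine Finset.sum_congr rfl fun s _ => ?_
  unfold extendedMatrixCoeff
  split_ifs <;> simp

theorem memLp_extendedMatrixCoeff_comp_mul_mul [TopologicalSpace G] [IsTopologicalGroup G]
    [LocallyCompactSpace G] [MeasurableSpace G] [BorelSpace G] {μ : Measure G}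
    [μ.IsHaarMeasure] (hH : IsOpen (H : Set G)) {π : ↥H →* (V ≃ₗᵢ[ℂ] V)}
    (hπ : ∀ v : V, Continuous fun h : ↥H => π h v) {v w : V} {q : ℝ≥0∞} (hq0 : q ≠ 0)
    (hq : q ≠ ∞) (hmem : MemLp (extendedMatrixCoeff π v w) q (μ.restrict H)) (a b : G) :
    MemLp (fun g => extendedMatrixCoeff π v w (a * g * b)) q μ := by
  have hmemG : MemLp (extendedMatrixCoeff π v w) q μ := by
    rw [← Set.indicator_eq_self.2 (support_extendedMatrixCoeff_subset π v w),
      memLp_indicator_iff_restrict hH.measurableSet]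
    exact hmem
  have hlsc := lowerSemicontinuous_norm_extendedMatrixCoeff_rpow hH hπ v w
    (ENNReal.toReal_pos hq0 hq)
  exact (MemLp.comp_mul_right_of_lowerSemicontinuous
    (measurable_extendedMatrixCoeff hH hπ v w).stronglyMeasurable hmemG hq0 hq hlsc b
    ).comp_measurePreserving (measurePreserving_mul_left μ a)

end InducedRepresentation

theorem induced_representation_Lp_plus_general
    {G : Type*} [Group G] [TopologicalSpace G] [IsTopologicalGroup G]
    [LocallyCompactSpace G] [MeasurableSpace G] [BorelSpace G]
    (μ : Measure G) [μ.IsHaarMeasure]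
    (H : Subgroup G) (hH : IsOpen (H : Set G))
    (T : Set G) (hT : ∀ g : G, ∃! t : G, t ∈ T ∧ t⁻¹ * g ∈ H)
    {V : Type*} [NormedAddCommGroup V] [InnerProductSpace ℂ V]
    (π : ↥H →* (V ≃ₗᵢ[ℂ] V))
    (hπcont : ∀ v : V, Continuous fun h : ↥H => π h v)
    (p : ℝ) (hp : 1 ≤ p)
    (f f' : G → V)
    (hfequiv : ∀ g : G, ∀ h : ↥H, f (g * h) = π h⁻¹ (f g))
    (hfsupp : {t : T | f t ≠ 0}.Finite)
    (hf'supp : {t : T | f' t ≠ 0}.Finite)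
    (hLp : ∀ t ∈ T, ∀ t' ∈ T, ∀ ε : ℝ, 0 < ε →
      MemLp (fun g : G => if hg : g ∈ H then (inner ℂ ((π ⟨g, hg⟩) (f t)) (f' t') : ℂ) else 0)
        (ENNReal.ofReal (p + ε)) (μ.restrict (H : Set G))) :
    ∀ ε : ℝ, 0 < ε →
      MemLp (fun g : G => ∑' t : T, (inner ℂ (f (g⁻¹ * t)) (f' t) : ℂ))
        (ENNReal.ofReal (p + ε)) μ := by
  intro ε hε
  have hq0 : ENNReal.ofReal (p + ε) ≠ 0 := (ENNReal.ofReal_pos.2 (by linarith)).ne'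
  have hsum : (fun g : G => ∑' t : T, (inner ℂ (f (g⁻¹ * t)) (f' t) : ℂ))
      = fun g => ∑ t' ∈ hf'supp.toFinset, ∑ s ∈ hfsupp.toFinset,
          extendedMatrixCoeff π (f s) (f' t') ((t' : G)⁻¹ * g * s) := by
    funext g
    rw [tsum_eq_sum fun t ht => by
      rw [not_not.1 (mt hf'supp.mem_toFinset.2 ht), inner_zero_right]]
    refine Finset.sum_congr rfl fun t' _ => ?_
    rw [inner_eq_sum_extendedMatrixCoeff hT hfequiv (fun t ht => hfsupp.mem_toFinset.2 ht)]
    simp only [mul_inv_rev, inv_inv]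
  rw [hsum]
  exact memLp_finsetSum _ fun t' _ => memLp_finsetSum _ fun s _ =>
    memLp_extendedMatrixCoeff_comp_mul_mul hH hπcont hq0 ENNReal.ofReal_ne_top
      (hLp s s.2 t' t'.2 ε hε) _ _

/-- The `L^{p+}` case of Proposition 1.2: if `H` is an open subgroup of a locally compact
group `G`, `π` a unitary representation of `H`, and `f, f'` are equivariant functions
supported on finitely many cosets whose component matrix coefficients
`h ↦ ⟨π(h) f(t), f'(t')⟩` lie in `L^{p+ε}(H)` for every `ε > 0`, then the matrix
coefficient `g ↦ ∑_{t ∈ T} ⟨f(g⁻¹ t), f'(t)⟩` of the induced representation lies in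
`L^{p+ε}(G)` for every `ε > 0`. -/
theorem induced_representation_Lp_plus
    {G : Type*} [Group G] [TopologicalSpace G] [IsTopologicalGroup G]
    [LocallyCompactSpace G] [T2Space G] [MeasurableSpace G] [BorelSpace G]
    (μ : Measure G) [μ.IsHaarMeasure]
    (H : Subgroup G) (hH : IsOpen (H : Set G))
    (T : Set G) (hT : ∀ g : G, ∃! t : G, t ∈ T ∧ t⁻¹ * g ∈ H)
    {V : Type*} [NormedAddCommGroup V] [InnerProductSpace ℂ V] [CompleteSpace V]
    (π : ↥H →* (V ≃ₗᵢ[ℂ] V))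
    (hπcont : ∀ v : V, Continuous fun h : ↥H => π h v)
    (p : ℝ) (hp : 1 ≤ p)
    (f f' : G → V)
    (hfequiv : ∀ g : G, ∀ h : ↥H, f (g * h) = π h⁻¹ (f g))
    (hf'equiv : ∀ g : G, ∀ h : ↥H, f' (g * h) = π h⁻¹ (f' g))
    (hfsupp : {t : T | f t ≠ 0}.Finite)
    (hf'supp : {t : T | f' t ≠ 0}.Finite)
    (hLp : ∀ t ∈ T, ∀ t' ∈ T, ∀ ε : ℝ, 0 < ε →
      MemLp (fun g : G => if hg : g ∈ H then (inner ℂ ((π ⟨g, hg⟩) (f t)) (f' t') : ℂ) else 0)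
        (ENNReal.ofReal (p + ε)) (μ.restrict (H : Set G))) :
    ∀ ε : ℝ, 0 < ε →
      MemLp (fun g : G => ∑' t : T, (inner ℂ (f (g⁻¹ * t)) (f' t) : ℂ))
        (ENNReal.ofReal (p + ε)) μ :=
  induced_representation_Lp_plus_general μ H hH T hT π hπcont p hp f f' hfequiv hfsupp hf'supp hLp
end
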